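/- Let s, t ∈ ℂ with |s| > |t|, and let w ∈ ℂ satisfy s·t·w² = |s|·|t|·|w|². Then e^{−|w|²/2} · sup_{z∈ℂ} |K^{(s,t)}(z,w)|·e^{−|z|²/2} ≥ |s|^{−1/2} · exp( (1 + |t|² − |s|²)·|w|²/(2|s|·(|s|−|t|)) ). -/

import Mathlib

open MeasureTheory Real Filter
open scoped ENNReal

/-- Principal branch of the complex square root. -/
noncomputable def csqrt (z : ℂ) : ℂ := z ^ ((1 : ℂ) / 2)

/-- The canonical integral kernel `K^{(s,t)}(z,w)`. -/
noncomputable def Kst (s t z w : ℂ) : ℂ :=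
  (csqrt s)⁻¹ *
    Complex.exp ((t * z ^ 2 - (starRingEnd ℂ) t * ((starRingEnd ℂ) w) ^ 2
      + 2 * z * (starRingEnd ℂ) w) / (2 * s))

/-!
Evaluate the supremum at a point `z = c·s·w` with `c` real. The alignment condition
`s t w² = |s||t||w|²` makes the exponent of the kernel real there (using `s s̄ = |s|²` and
`conj(t w²) = s |t||w|²/|s|`), so the weighted kernel becomes `|s|^{-1/2}` times the exponential of
a concave quadratic in `c`. Its maximum, attained at `c = 1/(|s|(|s|-|t|))`, is exactly the
claimed exponent.
-/

open ComplexConjugate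

lemma norm_csqrt (z : ℂ) : ‖csqrt z‖ = ‖z‖ ^ (1 / 2 : ℝ) := by
  simpa [csqrt] using Complex.norm_cpow_real z (1 / 2)

lemma norm_Kst (s t z w : ℂ) :
    ‖Kst s t z w‖ = ‖s‖ ^ (-(1 / 2 : ℝ)) *
      Real.exp ((t * z ^ 2 - conj t * conj w ^ 2 + 2 * z * conj w) / (2 * s)).re := by
  rw [Kst, norm_mul, norm_inv, Complex.norm_exp, norm_csqrt, Real.rpow_neg (norm_nonneg s)]

lemma Kst_exponent_of_aligned {s t w : ℂ} (hs : s ≠ 0)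
    (hw : s * t * w ^ 2 = ((‖s‖ * ‖t‖ * ‖w‖ ^ 2 : ℝ) : ℂ)) (c : ℝ) :
    (t * (c * s * w) ^ 2 - conj t * conj w ^ 2 + 2 * (c * s * w) * conj w) / (2 * s) =
      ((c ^ 2 * ‖s‖ * ‖t‖ * ‖w‖ ^ 2 / 2 - ‖t‖ * ‖w‖ ^ 2 / (2 * ‖s‖) + c * ‖w‖ ^ 2 : ℝ) : ℂ) := by
  have hwc : conj s * (conj t * conj w ^ 2) = ((‖s‖ * ‖t‖ * ‖w‖ ^ 2 : ℝ) : ℂ) := by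
    simpa [mul_assoc] using congrArg conj hw
  have hss := Complex.mul_conj s
  have hww := Complex.mul_conj w
  rw [Complex.normSq_eq_norm_sq] at hss hww
  have hs_norm : (‖s‖ : ℂ) ≠ 0 := by simpa using hs
  push_cast at hw hwc hss hww ⊢
  have hconj_tw : ‖s‖ * (conj t * conj w ^ 2) = s * ‖t‖ * ‖w‖ ^ 2 := by
    refine mul_left_cancel₀ hs_norm ?_
    linear_combination s * hwc - (conj t * conj w ^ 2) * hss
  rw [div_eq_iff (mul_ne_zero two_ne_zero hs)]
  field_simp
  linear_combination (c ^ 2 * s * ‖s‖) * hw - hconj_tw + 2 * c * s * ‖s‖ * hww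

lemma weighted_norm_Kst_of_aligned {s t w : ℂ} (hs : s ≠ 0)
    (hw : s * t * w ^ 2 = ((‖s‖ * ‖t‖ * ‖w‖ ^ 2 : ℝ) : ℂ)) (c : ℝ) :
    Real.exp (-‖w‖ ^ 2 / 2) * (‖Kst s t (c * s * w) w‖ * Real.exp (-‖(c : ℂ) * s * w‖ ^ 2 / 2)) =
      ‖s‖ ^ (-(1 / 2 : ℝ)) * Real.exp (c * ‖w‖ ^ 2 - c ^ 2 * ‖s‖ * (‖s‖ - ‖t‖) * ‖w‖ ^ 2 / 2
        - ‖w‖ ^ 2 / 2 - ‖t‖ * ‖w‖ ^ 2 / (2 * ‖s‖)) := by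
  rw [norm_Kst, Kst_exponent_of_aligned hs hw, Complex.ofReal_re, norm_mul, norm_mul,
    Complex.norm_real, Real.norm_eq_abs, mul_pow, mul_pow, sq_abs, mul_left_comm]
  simp only [mul_assoc _ (Real.exp _), ← Real.exp_add]
  congr 2
  ring

theorem stmt14 (s t : ℂ) (hst : ‖t‖ < ‖s‖) (w : ℂ)
    (hw : s * t * w ^ 2 = ((‖s‖ * ‖t‖ * ‖w‖ ^ 2 : ℝ) : ℂ)) :
    ENNReal.ofReal (‖s‖ ^ (-(1 : ℝ) / 2) *
        Real.exp ((1 + ‖t‖ ^ 2 - ‖s‖ ^ 2) * ‖w‖ ^ 2 /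
          (2 * ‖s‖ * (‖s‖ - ‖t‖))))
      ≤ ⨆ z : ℂ, ENNReal.ofReal (Real.exp (-‖w‖ ^ 2 / 2) *
          (‖Kst s t z w‖ * Real.exp (-‖z‖ ^ 2 / 2))) := by
  have hs : 0 < ‖s‖ := (norm_nonneg t).trans_lt hst
  have hgap : 0 < ‖s‖ - ‖t‖ := sub_pos.mpr hst
  refine le_trans ?_ (le_iSup _ ((((‖s‖ * (‖s‖ - ‖t‖))⁻¹ : ℝ) : ℂ) * s * w))
  rw [weighted_norm_Kst_of_aligned (norm_pos_iff.mp hs) hw, neg_div]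
  refine ENNReal.ofReal_le_ofReal (le_of_eq ?_)
  congr 2
  field_simp
  ring
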